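/- For all real x, exp(x - x²/2) ≤ 1 + x + x²/3. -/

import Mathlib

/-!
Multiplying by `exp (x ^ 2 / 2 - x)` removes the exponential from the right-hand side: the claim
becomes `1 ≤ (1 + x + x ^ 2 / 3) * exp (x ^ 2 / 2 - x)`. The derivative of this weight is
`x * ((x + 1) ^ 2 + 1) * exp (x ^ 2 / 2 - x) / 3`, which has the sign of `x`, so the weight is
minimal at `0`, where it equals `1`.
-/

open Real Set

noncomputable def delyonWeight (x : ℝ) : ℝ :=
  (1 + x + x ^ 2 / 3) * exp (x ^ 2 / 2 - x)

lemma hasDerivAt_delyonWeight (x : ℝ) :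
    HasDerivAt delyonWeight (x * (((x + 1) ^ 2 + 1) * exp (x ^ 2 / 2 - x) / 3)) x := by
  have hpoly : HasDerivAt (fun y : ℝ => 1 + y + y ^ 2 / 3) (1 + 2 * x / 3) x :=
    (((hasDerivAt_id' x).const_add 1).add ((hasDerivAt_pow 2 x).div_const 3)).congr_deriv
      (by ring)
  have hexp : HasDerivAt (fun y : ℝ => exp (y ^ 2 / 2 - y)) (exp (x ^ 2 / 2 - x) * (x - 1)) x :=
    (((hasDerivAt_pow 2 x).div_const 2).sub (hasDerivAt_id' x)).exp.congr_deriv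
      (by simp only [Pi.sub_apply]; ring)
  exact (hpoly.mul hexp).congr_deriv (by ring)

lemma isMinOn_delyonWeight : IsMinOn delyonWeight univ 0 := by
  have hderiv (x : ℝ) :
      deriv delyonWeight x = x * (((x + 1) ^ 2 + 1) * exp (x ^ 2 / 2 - x) / 3) :=
    (hasDerivAt_delyonWeight x).deriv
  have hdiff : Differentiable ℝ delyonWeight := fun x =>
    (hasDerivAt_delyonWeight x).differentiableAt
  refine isMinOn_univ_of_deriv hdiff.continuous.continuousAt hdiff.differentiableOn
    hdiff.differentiableOn (fun x hx => ?_) (fun x hx => ?_) <;> rw [hderiv]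
  · exact mul_nonpos_of_nonpos_of_nonneg (le_of_lt hx) (by positivity)
  · exact mul_nonneg (le_of_lt hx) (by positivity)

theorem delyon_inequality (x : ℝ) :
    Real.exp (x - x ^ 2 / 2) ≤ 1 + x + x ^ 2 / 3 := by
  have hweight : 1 ≤ delyonWeight x := by
    simpa [delyonWeight] using isMinOn_delyonWeight (mem_univ x)
  calc exp (x - x ^ 2 / 2) ≤ exp (x - x ^ 2 / 2) * delyonWeight x :=
        le_mul_of_one_le_right (exp_pos _).le hweight
    _ = 1 + x + x ^ 2 / 3 := by
        rw [delyonWeight, mul_left_comm, ← exp_add]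
        simp
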